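/- arXiv:1209.0956 — 2 statements merged into one kernel-verified Lean document; each statement's English description precedes it below -/
import Mathlib

section
/- Let C, D ⊆ L⁰ be nonempty, and consider the classes 𝒜 = {B ∈ 𝒢 : for every y ∈ D^cc there exists ξ ∈ C^cc with y = ξ a.e. on B} and 𝒜^⊢ = {B ∈ 𝒢 : there exists y ∈ D^cc such that for every A ∈ 𝒢 with A ⊆ B and P(A) > 0 no ξ ∈ C^cc satisfies y = ξ a.e. on A}. Then there exist a maximal element A_M of 𝒜 and a maximal element A_M^⊢ of 𝒜^⊢ (maximal in the sense that every member of the class is contained in it up to null sets; one of the two may have zero probability), A_M^⊢ is a.s. the complement of A_M, and: for every y ∈ D^cc there exists ξ ∈ C^cc with y = ξ a.e. on A_M; and there exists y ∈ D^cc such that for every A ⊆ A_M^⊢ with P(A) > 0 no ξ ∈ C^cc satisfies y = ξ a.e. on A. -/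
open MeasureTheory

variable {Ω : Type*} [MeasurableSpace Ω]

/-- The countable concatenation property (CSet): for every countable measurable partition
`{A n}` of `Ω` and every sequence `{x n} ⊆ C`, the concatenation `∑ n, 1_{A n} • x n`
(i.e. the element `z ∈ L⁰` agreeing a.e. with `x n` on each `A n`) belongs to `C`. -/
def CSet (μ : Measure Ω) (C : Set (Ω →ₘ[μ] ℝ)) : Prop :=
  ∀ A : ℕ → Set Ω, (∀ n, MeasurableSet (A n)) → Pairwise (Function.onFun Disjoint A) →
    (⋃ n, A n) = Set.univ →
    ∀ x : ℕ → Ω →ₘ[μ] ℝ, (∀ n, x n ∈ C) →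
      ∀ z : Ω →ₘ[μ] ℝ, (∀ n, ∀ᵐ ω ∂μ, ω ∈ A n → z ω = x n ω) → z ∈ C

/-- The countable concatenation hull `C^cc` of `C`. -/
def ccHull (μ : Measure Ω) (C : Set (Ω →ₘ[μ] ℝ)) : Set (Ω →ₘ[μ] ℝ) :=
  {z | ∃ (A : ℕ → Set Ω) (x : ℕ → Ω →ₘ[μ] ℝ),
    (∀ n, MeasurableSet (A n)) ∧ Pairwise (Function.onFun Disjoint A) ∧
    (⋃ n, A n) = Set.univ ∧ (∀ n, x n ∈ C) ∧
    ∀ n, ∀ᵐ ω ∂μ, ω ∈ A n → z ω = x n ω}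

/-- `C 1_A = L⁰ 1_A`: every `x ∈ L⁰` agrees a.e. on `A` with some element of `C`. -/
def FullOn (μ : Measure Ω) (C : Set (Ω →ₘ[μ] ℝ)) (A : Set Ω) : Prop :=
  ∀ x : Ω →ₘ[μ] ℝ, ∃ ξ ∈ C, ∀ᵐ ω ∂μ, ω ∈ A → x ω = ξ ω

/-- `A` is (a version of) the maximal set `A_C` of the class
`{A ∈ 𝒢 ∣ C 1_A = L⁰ 1_A}`; its complement `Aᶜ` is then `D_C`. -/
def IsMaxFull (μ : Measure Ω) (C : Set (Ω →ₘ[μ] ℝ)) (A : Set Ω) : Prop :=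
  MeasurableSet A ∧ FullOn μ C A ∧
    ∀ B : Set Ω, MeasurableSet B → FullOn μ C B → μ (B \ A) = 0

/-- `x` is locally separated from `C` on `H`: for every `B ⊆ H` with `μ B > 0`
there is no `ξ ∈ C` with `x = ξ` a.e. on `B`.  With `H = D_C` this is the paper's
notion of `x` being outside `C`. -/
def LocOutside (μ : Measure Ω) (C : Set (Ω →ₘ[μ] ℝ)) (x : Ω →ₘ[μ] ℝ) (H : Set Ω) : Prop :=
  ∀ B : Set Ω, MeasurableSet B → B ⊆ H → 0 < μ B →
    ¬ ∃ ξ ∈ C, ∀ᵐ ω ∂μ, ω ∈ B → x ω = ξ ω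

/-- `H` is (a version of) the largest measurable set `H_{C,x}` on which `x` is locally
separated from `C`. -/
def IsMaxLocOutside (μ : Measure Ω) (C : Set (Ω →ₘ[μ] ℝ)) (x : Ω →ₘ[μ] ℝ) (H : Set Ω) : Prop :=
  MeasurableSet H ∧ LocOutside μ C x H ∧
    ∀ B : Set Ω, MeasurableSet B → LocOutside μ C x B → μ (B \ H) = 0

/-- `C ⊆ L⁰` is conditionally evenly convex: there are a family `L ⊆ L⁰` and
`Y_{x'} ∈ L⁰` for each `x' ∈ L` with
`C = ⋂_{x' ∈ L} {x ∣ x·x' < Y_{x'} a.e. on D_C}` (where `D_C = Aᶜ` for the maximal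
full set `A = A_C`; the case `L = ∅` gives `C = L⁰`). -/
def CondEvenlyConvex (μ : Measure Ω) (C : Set (Ω →ₘ[μ] ℝ)) : Prop :=
  ∃ A : Set Ω, IsMaxFull μ C A ∧
    ∃ (L : Set (Ω →ₘ[μ] ℝ)) (Y : (Ω →ₘ[μ] ℝ) → Ω →ₘ[μ] ℝ),
      C = ⋂ x' ∈ L, {x : Ω →ₘ[μ] ℝ | ∀ᵐ ω ∂μ, ω ∈ Aᶜ → x ω * x' ω < Y x' ω}

/-- The polar `C°` of `C` (relative to `D = D_C`). -/
def polarSet (μ : Measure Ω) (C : Set (Ω →ₘ[μ] ℝ)) (D : Set Ω) : Set (Ω →ₘ[μ] ℝ) :=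
  {x' | ∀ x ∈ C, ∀ᵐ ω ∂μ, ω ∈ D → x ω * x' ω < 1}

/-- The bipolar `C°°` of `C` (relative to `D = D_C`). -/
def bipolarSet (μ : Measure Ω) (C : Set (Ω →ₘ[μ] ℝ)) (D : Set Ω) : Set (Ω →ₘ[μ] ℝ) :=
  {x | ∀ x' ∈ polarSet μ C D, ∀ᵐ ω ∂μ, ω ∈ D → x ω * x' ω < 1}

/-!
Both classes are closed under countable unions, because `D^cc` and `C^cc` are closed under
countable concatenation: witnesses found on the pieces `B n` can be glued along the disjointed
sequence of the `B n`. A class of measurable sets that contains `∅` and is closed under countable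
unions has an a.e.-greatest element, obtained as the union of a sequence whose measures approach
the supremum. The two maximal sets `A_M`, `A_M^⊢` meet in a null set, since the `y ∈ D^cc`
separated from `C^cc` on `A_M^⊢` still lies in `C^cc` on `A_M`. They cover `Ω` up to a null set:
for each `y ∈ D^cc`, the complement of the greatest set on which `y` lies in `C^cc` is a set on
which `y` is separated from `C^cc`, hence a.e. inside `A_M^⊢`; so every `y` lies in `C^cc` on the
complement of `A_M^⊢`, which therefore belongs to `𝒜`.
-/

open Set
open scoped ENNReal

variable {μ : Measure Ω}

def IsAEGreatest (μ : Measure Ω) (P : Set Ω → Prop) (M : Set Ω) : Prop :=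
  MeasurableSet M ∧ P M ∧ ∀ B, MeasurableSet B → P B → μ (B \ M) = 0

theorem exists_isAEGreatest [IsFiniteMeasure μ] {P : Set Ω → Prop} (hempty : P ∅)
    (hunion : ∀ B : ℕ → Set Ω, (∀ n, MeasurableSet (B n)) → (∀ n, P (B n)) → P (⋃ n, B n)) :
    ∃ M, IsAEGreatest μ P M := by
  set S : Set ℝ≥0∞ := (fun B => μ B) '' {B | MeasurableSet B ∧ P B}
  obtain ⟨u, -, hu, huS⟩ :=
    exists_seq_tendsto_sSup (S := S) ⟨_, ∅, ⟨.empty, hempty⟩, rfl⟩ (OrderTop.bddAbove S)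
  choose B hB hμB using huS
  set M := ⋃ n, B n
  have hM : MeasurableSet M := .iUnion fun n => (hB n).1
  have hPM : P M := hunion B (fun n => (hB n).1) fun n => (hB n).2
  have hle : ∀ A, MeasurableSet A → P A → μ A ≤ μ M := fun A hA hPA =>
    (le_csSup (OrderTop.bddAbove S) ⟨A, ⟨hA, hPA⟩, rfl⟩).trans
      (le_of_tendsto' hu fun n => hμB n ▸ measure_mono (subset_iUnion B n))
  refine ⟨M, hM, hPM, fun A hA hPA => ?_⟩
  have hPAM : P (A ∪ M) := by
    have := hunion (fun n => Nat.casesOn n A B : ℕ → Set Ω)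
      (fun n => n.casesOn hA fun n => (hB n).1) fun n => n.casesOn hPA fun n => (hB n).2
    rwa [← union_iUnion_nat_succ] at this
  have hAM : M =ᵐ[μ] (A ∪ M : Set Ω) := ae_eq_of_subset_of_measure_ge subset_union_right
    (hle _ (hA.union hM) hPAM) hM.nullMeasurableSet (measure_ne_top μ _)
  exact ae_le_set.1 (subset_union_left.eventuallyLE.trans hAM.symm.le)

theorem exists_aeEqFun_eq_on_partition {A : ℕ → Set Ω} (hA : ∀ n, MeasurableSet (A n))
    (hdisj : Pairwise (Function.onFun Disjoint A)) (hcov : (⋃ n, A n) = univ)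
    (x : ℕ → Ω →ₘ[μ] ℝ) : ∃ z : Ω →ₘ[μ] ℝ, ∀ n, ∀ᵐ ω ∂μ, ω ∈ A n → z ω = x n ω := by
  classical
  have hcov' : ∀ ω, ∃ n, ω ∈ A n := fun ω => mem_iUnion.1 (hcov ▸ mem_univ ω)
  have hg : Measurable fun ω => x (Nat.find (hcov' ω)) ω :=
    Measurable.find (p := fun n ω => ω ∈ A n) (fun n => (x n).stronglyMeasurable.measurable)
      hA hcov'
  refine ⟨AEEqFun.mk _ hg.aestronglyMeasurable, fun n => ?_⟩
  filter_upwards [AEEqFun.coeFn_mk _ hg.aestronglyMeasurable] with ω hω hωA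
  have hfind : Nat.find (hcov' ω) = n := by
    by_contra hne
    exact disjoint_left.1 (hdisj hne) (Nat.find_spec (hcov' ω)) hωA
  rw [hω, hfind]

theorem subset_ccHull (μ : Measure Ω) (C : Set (Ω →ₘ[μ] ℝ)) : C ⊆ ccHull μ C := by
  intro x hx
  refine ⟨fun n => if n = 0 then univ else ∅, fun _ => x, fun n => ?_, fun i j hij => ?_, ?_,
    fun _ => hx, fun _ => .of_forall fun _ _ => rfl⟩
  · by_cases h : n = 0 <;> simp [h]
  · rcases eq_or_ne i 0 with rfl | hi
    · simp [Function.onFun, hij.symm]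
    · simp [Function.onFun, hi]
  · exact eq_univ_of_forall fun ω => mem_iUnion.2 ⟨0, by simp⟩

theorem cSet_ccHull (μ : Measure Ω) (C : Set (Ω →ₘ[μ] ℝ)) : CSet μ (ccHull μ C) := by
  intro A hA hdisj hcov x hx z hz
  choose A' x' hA' hdisj' hcov' hxC hxx' using hx
  -- refine the partition `A` by the partitions `A' n` witnessing `x n ∈ ccHull μ C`
  let e : ℕ ≃ ℕ × ℕ := (Denumerable.eqv (ℕ × ℕ)).symm
  refine ⟨fun k => A (e k).1 ∩ A' (e k).1 (e k).2, fun k => x' (e k).1 (e k).2,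
    fun k => (hA _).inter (hA' _ _), fun i j hij => ?_, ?_, fun k => hxC _ _, fun k => ?_⟩
  · rcases eq_or_ne (e i).1 (e j).1 with h1 | h1
    · have h2 : (e i).2 ≠ (e j).2 := fun h2 => hij (e.injective (Prod.ext h1 h2))
      have hA'ij : Disjoint (A' (e i).1 (e i).2) (A' (e j).1 (e j).2) := by
        rw [← h1]; exact hdisj' (e i).1 h2
      exact hA'ij.mono inter_subset_right inter_subset_right
    · exact (hdisj h1).mono inter_subset_left inter_subset_left
  · refine eq_univ_of_forall fun ω => ?_
    obtain ⟨n, hn⟩ := mem_iUnion.1 (hcov ▸ mem_univ ω)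
    obtain ⟨m, hm⟩ := mem_iUnion.1 (hcov' n ▸ mem_univ ω)
    exact mem_iUnion.2 ⟨e.symm (n, m), by simp [hn, hm]⟩
  · filter_upwards [hz (e k).1, hxx' (e k).1 (e k).2] with ω h1 h2 hω
    rw [h1 hω.1, h2 hω.2]

theorem CSet.exists_eq_on_disjointed {S : Set (Ω →ₘ[μ] ℝ)} (hS : CSet μ S) {B : ℕ → Set Ω}
    (hB : ∀ n, MeasurableSet (B n)) {x : ℕ → Ω →ₘ[μ] ℝ} (hx : ∀ n, x n ∈ S) :
    ∃ z ∈ S, ∀ n, ∀ᵐ ω ∂μ, ω ∈ disjointed B n → z ω = x n ω := by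
  -- adding the remainder `(⋃ i, B i)ᶜ` to every `B n` only enlarges `disjointed B 0`
  set u := fun n => B n ∪ (⋃ i, B i)ᶜ
  have hu : ∀ n, MeasurableSet (u n) := fun n => (hB n).union (.compl (.iUnion hB))
  have hcov : (⋃ n, disjointed u n) = univ := by
    rw [iUnion_disjointed, ← iUnion_union, union_compl_self]
  have hsub : ∀ n, disjointed B n ⊆ disjointed u n := by
    intro n ω hω
    simp only [u, disjointed_eq_inter_compl, mem_inter_iff, mem_iInter, mem_compl_iff,
      mem_union] at hω ⊢
    have hω' : ω ∈ ⋃ i, B i := mem_iUnion.2 ⟨n, hω.1⟩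
    exact ⟨Or.inl hω.1, fun i hi h => h.elim (hω.2 i hi) (· hω')⟩
  obtain ⟨z, hz⟩ := exists_aeEqFun_eq_on_partition (MeasurableSet.disjointed hu)
    (disjoint_disjointed u) hcov x
  exact ⟨z, hS _ (MeasurableSet.disjointed hu) (disjoint_disjointed u) hcov x hx z hz,
    fun n => (hz n).mono fun ω h hω => h (hsub n hω)⟩

/-- `y ∈ S` on `B`, i.e. `y 1_B ∈ S 1_B`. -/
def MemOn (μ : Measure Ω) (S : Set (Ω →ₘ[μ] ℝ)) (y : Ω →ₘ[μ] ℝ) (B : Set Ω) : Prop :=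
  ∃ ξ ∈ S, ∀ᵐ ω ∂μ, ω ∈ B → y ω = ξ ω

section MemOn

variable {S : Set (Ω →ₘ[μ] ℝ)} {y : Ω →ₘ[μ] ℝ} {A B : Set Ω}

theorem memOn_empty (hS : S.Nonempty) : MemOn μ S y ∅ :=
  let ⟨ξ, hξ⟩ := hS
  ⟨ξ, hξ, .of_forall fun _ h => h.elim⟩

theorem MemOn.mono_ae (h : MemOn μ S y B) (hAB : μ (A \ B) = 0) : MemOn μ S y A := by
  obtain ⟨ξ, hξ, hyξ⟩ := h
  refine ⟨ξ, hξ, ?_⟩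
  filter_upwards [hyξ, ae_le_set.2 hAB] with ω hω hAB' hA
  exact hω (hAB' hA)

theorem MemOn.mono (h : MemOn μ S y B) (hAB : A ⊆ B) : MemOn μ S y A :=
  h.mono_ae (by rw [sdiff_eq_empty.2 hAB, measure_empty])

theorem locOutside_empty : LocOutside μ S y ∅ := fun B _ hB hpos =>
  absurd hpos (by rw [subset_empty_iff.1 hB, measure_empty]; exact lt_irrefl 0)

theorem LocOutside.measure_eq_zero (h : LocOutside μ S y B) (hA : MeasurableSet A)
    (hAB : A ⊆ B) (hy : MemOn μ S y A) : μ A = 0 := by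
  by_contra hpos
  exact h A hA hAB (pos_iff_ne_zero.2 hpos) hy

theorem IsAEGreatest.locOutside_compl {M : Set Ω} (h : IsAEGreatest μ (MemOn μ S y) M) :
    LocOutside μ S y Mᶜ := fun A hA hAM hpos hy => by
  have hA0 := h.2.2 A hA hy
  rw [sdiff_eq_left.2 (subset_compl_iff_disjoint_right.1 hAM)] at hA0
  exact hpos.ne' hA0

theorem CSet.memOn_iUnion (hS : CSet μ S) {B : ℕ → Set Ω} (hB : ∀ n, MeasurableSet (B n))
    (h : ∀ n, MemOn μ S y (B n)) : MemOn μ S y (⋃ n, B n) := by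
  choose ξ hξ hyξ using h
  obtain ⟨z, hz, hzξ⟩ := hS.exists_eq_on_disjointed hB hξ
  refine ⟨z, hz, ?_⟩
  filter_upwards [ae_all_iff.2 hzξ, ae_all_iff.2 hyξ] with ω hzξ' hyξ' hω
  rw [← iUnion_disjointed] at hω
  obtain ⟨n, hn⟩ := mem_iUnion.1 hω
  rw [hyξ' n (disjointed_subset B n hn), hzξ' n hn]

theorem CSet.exists_locOutside_iUnion {T : Set (Ω →ₘ[μ] ℝ)} (hT : CSet μ T) {B : ℕ → Set Ω}
    (hB : ∀ n, MeasurableSet (B n)) {y : ℕ → Ω →ₘ[μ] ℝ} (hy : ∀ n, y n ∈ T)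
    (h : ∀ n, LocOutside μ S (y n) (B n)) : ∃ z ∈ T, LocOutside μ S z (⋃ n, B n) := by
  obtain ⟨z, hz, hzy⟩ := hT.exists_eq_on_disjointed hB hy
  refine ⟨z, hz, fun A hA hAB hpos hzA => ?_⟩
  obtain ⟨n, hn⟩ : ∃ n, μ (A ∩ disjointed B n) ≠ 0 := by
    by_contra! h0
    refine hpos.ne' (measure_mono_null ?_ (measure_iUnion_null h0))
    rw [← inter_iUnion, iUnion_disjointed]
    exact subset_inter subset_rfl hAB
  refine h n _ (hA.inter (.disjointed hB n)) (inter_subset_right.trans (disjointed_subset B n))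
    (pos_iff_ne_zero.2 hn) ?_
  obtain ⟨ξ, hξ, hzξ⟩ := hzA
  refine ⟨ξ, hξ, ?_⟩
  filter_upwards [hzy n, hzξ] with ω hzy' hzξ' hω
  rw [← hzy' hω.2, hzξ' hω.1]

theorem CSet.memOn_compl_of_locOutside [IsFiniteMeasure μ] (hS : CSet μ S) (hne : S.Nonempty)
    {H : Set Ω} (hH : ∀ B, MeasurableSet B → LocOutside μ S y B → μ (B \ H) = 0) :
    MemOn μ S y Hᶜ := by
  obtain ⟨M, hM⟩ := exists_isAEGreatest (μ := μ) (memOn_empty hne) fun _ hB => hS.memOn_iUnion hB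
  refine hM.2.1.mono_ae ?_
  rw [sdiff_eq_compl_inter, ← sdiff_eq]
  exact hH _ hM.1.compl hM.locOutside_compl

end MemOn

/-- **Maximal full / maximal separated stratification for a pair of sets.**
Let `C, D ⊆ L⁰` be nonempty.  Consider the class `𝒜` of measurable `B` such that
every `y ∈ D^cc` agrees a.e. on `B` with some `ξ ∈ C^cc`, and the class `𝒜^⊢` of
measurable `B` such that some `y ∈ D^cc` is locally separated from `C^cc` on `B`.
Then `𝒜` and `𝒜^⊢` have maximal elements `A_M`, `A_M^⊢` (up to null sets),
`A_M^⊢` is a.s. the complement of `A_M`, and the defining properties hold on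
`A_M` and `A_M^⊢` respectively. -/
theorem stmt16 (μ : Measure Ω) [IsProbabilityMeasure μ]
    (C D : Set (Ω →ₘ[μ] ℝ)) (hC : C.Nonempty) (hD : D.Nonempty) :
    ∃ AM AM' : Set Ω, MeasurableSet AM ∧ MeasurableSet AM' ∧
      μ (AM ∩ AM') = 0 ∧ μ (AM ∪ AM') = 1 ∧
      (∀ B : Set Ω, MeasurableSet B →
        (∀ y ∈ ccHull μ D, ∃ ξ ∈ ccHull μ C, ∀ᵐ ω ∂μ, ω ∈ B → y ω = ξ ω) →
        μ (B \ AM) = 0) ∧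
      (∀ B : Set Ω, MeasurableSet B →
        (∃ y ∈ ccHull μ D, LocOutside μ (ccHull μ C) y B) →
        μ (B \ AM') = 0) ∧
      (∀ y ∈ ccHull μ D, ∃ ξ ∈ ccHull μ C, ∀ᵐ ω ∂μ, ω ∈ AM → y ω = ξ ω) ∧
      (∃ y ∈ ccHull μ D, LocOutside μ (ccHull μ C) y AM') := by
  have hCcc : (ccHull μ C).Nonempty := hC.mono (subset_ccHull μ C)
  obtain ⟨AM, hAM, hAMmem, hAMmax⟩ := exists_isAEGreatest (μ := μ)
    (P := fun B => ∀ y ∈ ccHull μ D, MemOn μ (ccHull μ C) y B)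
    (fun _ _ => memOn_empty hCcc)
    fun _ hB h y hy => (cSet_ccHull μ C).memOn_iUnion hB fun n => h n y hy
  obtain ⟨AM', hAM', ⟨y, hy, hyout⟩, hAM'max⟩ := exists_isAEGreatest (μ := μ)
    (P := fun B => ∃ y ∈ ccHull μ D, LocOutside μ (ccHull μ C) y B)
    ((hD.mono (subset_ccHull μ D)).elim fun y hy => ⟨y, hy, locOutside_empty⟩)
    fun _ hB h => by
      choose y hy hout using h
      exact (cSet_ccHull μ D).exists_locOutside_iUnion hB hy hout
  have hcompl : μ (AM ∪ AM')ᶜ = 0 := by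
    rw [compl_union, inter_comm, ← sdiff_eq]
    exact hAMmax _ hAM'.compl fun y hy => (cSet_ccHull μ C).memOn_compl_of_locOutside hCcc
      fun B hB hout => hAM'max B hB ⟨y, hy, hout⟩
  refine ⟨AM, AM', hAM, hAM', ?_, (prob_compl_eq_zero_iff (hAM.union hAM')).1 hcompl,
    hAMmax, hAM'max, hAMmem, y, hy, hyout⟩
  exact hyout.measure_eq_zero (hAM.inter hAM') inter_subset_right
    ((hAMmem y hy).mono inter_subset_left)
end

section
/- Let π : L⁰ → L̄⁰ be regular (REG). Then: (a) π satisfies the quasiconvexity inequality π(Λ·x₁ + (1−Λ)·x₂) ≤ max{π(x₁), π(x₂)} a.s. for all x₁, x₂ ∈ L⁰ and all 𝒢-measurable Λ with 0 ≤ Λ ≤ 1 a.s., if and only if for every Y ∈ L⁰ the lower level set U_Y = {ξ ∈ L⁰ : π(ξ)·1_{T_π} ≤ Y} is L⁰-convex; (b) if the quasiconvexity inequality holds, then for every Y ∈ L̄⁰ and every D ∈ 𝒢 the set {ξ ∈ L⁰ : π(ξ) < Y a.e. on D} is L⁰-convex. -/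
/-!
Quasiconvexity makes every level set `L⁰`-convex directly. Conversely, to compare
`π (Λ x₁ + (1 - Λ) x₂)` with a rational level `q` on `A = T_π ∩ {π x₁ ≤ q} ∩ {π x₂ ≤ q}`, paste
`x₁` and `x₂` on `A` with a fixed `ξ₀` off `A` and use the convexity of `U_Y` for the level `Y`
equal to `q` on `A` and to a finite bound of `π ξ₀` off `A`; regularity carries the resulting
inequality back to the unpasted combination, and letting `q` run through `ℚ` gives the
quasiconvexity inequality. A `ξ₀` with `π ξ₀ < +∞` a.s. on `T_π` exists because the sets
`{π ξ = +∞}` are closed under countable intersections (by countable pasting), so one of them is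
a.e. minimal, and the maximality of `Υ_π` forces the minimal one to be null outside `Υ_π`.
-/

open MeasureTheory
open scoped Classical

variable {Ω : Type*} [MeasurableSpace Ω]

/-- `f ≤ g` almost everywhere (the a.e. order on `L̄⁰`). -/
def AELE (μ : Measure Ω) (f g : Ω → EReal) : Prop := ∀ᵐ ω ∂μ, f ω ≤ g ω

/-- `g` is the greatest lower bound, in the a.e. order, of the family `S ⊆ L̄⁰`.
(For `S = ∅` this forces `g = +∞` a.e., which is the paper's convention.) -/
def IsAEGLB (μ : Measure Ω) (S : Set (Ω → EReal)) (g : Ω → EReal) : Prop :=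
  (∀ f ∈ S, AELE μ g f) ∧ ∀ h : Ω → EReal, (∀ f ∈ S, AELE μ h f) → AELE μ h g

/-- `g` is the least upper bound, in the a.e. order, of the family `S ⊆ L̄⁰`. -/
def IsAELUB (μ : Measure Ω) (S : Set (Ω → EReal)) (g : Ω → EReal) : Prop :=
  (∀ f ∈ S, AELE μ f g) ∧ ∀ h : Ω → EReal, (∀ f ∈ S, AELE μ f h) → AELE μ g h

/-- Regularity (REG): `π (x·1_A + y·1_{Aᶜ}) = π x · 1_A + π y · 1_{Aᶜ}` for all
`x, y ∈ L⁰` and measurable `A`, expressed via an arbitrary representative `z` of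
`x·1_A + y·1_{Aᶜ}`. -/
def Reg (μ : Measure Ω) (π : (Ω →ₘ[μ] ℝ) → Ω → EReal) : Prop :=
  ∀ (x y : Ω →ₘ[μ] ℝ) (A : Set Ω), MeasurableSet A →
    ∀ z : Ω →ₘ[μ] ℝ, (∀ᵐ ω ∂μ, z ω = if ω ∈ A then x ω else y ω) →
      ∀ᵐ ω ∂μ, π z ω = if ω ∈ A then π x ω else π y ω

/-- `U` is (a version of) the maximal set `Υ_π` on which `π ≡ +∞`; its complement
is `T_π`. -/
def IsMaxInfty (μ : Measure Ω) (π : (Ω →ₘ[μ] ℝ) → Ω → EReal) (U : Set Ω) : Prop :=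
  MeasurableSet U ∧ (∀ ξ : Ω →ₘ[μ] ℝ, ∀ᵐ ω ∂μ, ω ∈ U → π ξ ω = ⊤) ∧
    ∀ B : Set Ω, MeasurableSet B → (∀ ξ : Ω →ₘ[μ] ℝ, ∀ᵐ ω ∂μ, ω ∈ B → π ξ ω = ⊤) →
      μ (B \ U) = 0

/-- The lower level set `U_Y = {ξ ∈ L⁰ ∣ π(ξ)·1_T ≤ Y}` (with the convention
`(+∞)·0 = 0` off `T`). -/
def levelSet (μ : Measure Ω) (π : (Ω →ₘ[μ] ℝ) → Ω → EReal) (T : Set Ω)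
    (Y : Ω →ₘ[μ] ℝ) : Set (Ω →ₘ[μ] ℝ) :=
  {ξ | ∀ᵐ ω ∂μ, (if ω ∈ T then π ξ ω else 0) ≤ (Y ω : EReal)}

/-- `S ⊆ L⁰` is `L⁰`-convex. -/
def L0Convex (μ : Measure Ω) (S : Set (Ω →ₘ[μ] ℝ)) : Prop :=
  ∀ x ∈ S, ∀ y ∈ S, ∀ Λ : Ω →ₘ[μ] ℝ, (∀ᵐ ω ∂μ, 0 ≤ Λ ω ∧ Λ ω ≤ 1) →
    Λ * x + (1 - Λ) * y ∈ S

/-- The family `{π ξ ∣ ξ ∈ L⁰, ξ·x' ≥ Y a.s.}` whose a.e.-greatest lower bound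
is `R(Y, x')`. -/
def RFamily (μ : Measure Ω) (π : (Ω →ₘ[μ] ℝ) → Ω → EReal) (Y x' : Ω →ₘ[μ] ℝ) :
    Set (Ω → EReal) :=
  {g | ∃ ξ : Ω →ₘ[μ] ℝ, (∀ᵐ ω ∂μ, Y ω ≤ ξ ω * x' ω) ∧ g = π ξ}

open Filter Set

def IsQuasiconvex (μ : Measure Ω) (π : (Ω →ₘ[μ] ℝ) → Ω → EReal) : Prop :=
  ∀ x₁ x₂ lam : Ω →ₘ[μ] ℝ, (∀ᵐ ω ∂μ, 0 ≤ lam ω ∧ lam ω ≤ 1) →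
    ∀ᵐ ω ∂μ, π (lam * x₁ + (1 - lam) * x₂) ω ≤ max (π x₁ ω) (π x₂ ω)

theorem exists_ae_minimal_of_countable_iInter {ι : Type*} [Nonempty ι] (μ : Measure Ω)
    [IsFiniteMeasure μ] {s : ι → Set Ω} (hs : ∀ i, MeasurableSet (s i))
    (hinter : ∀ f : ℕ → ι, ∃ j, s j ≤ᵐ[μ] ⋂ n, s (f n)) : ∃ j, ∀ i, s j ≤ᵐ[μ] s i := by
  obtain ⟨u, -, hu, hu_mem⟩ :=
    exists_seq_tendsto_sInf (range_nonempty fun i => μ (s i)) (OrderBot.bddBelow _)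
  choose f hf using hu_mem
  obtain ⟨j, hj⟩ := hinter f
  have hmin : ∀ i, μ (s j) ≤ μ (s i) := fun i =>
    (ge_of_tendsto' hu fun n => (hf n).symm ▸ (measure_mono_ae hj).trans
      (measure_mono (iInter_subset _ n))).trans (sInf_le ⟨i, rfl⟩)
  refine ⟨j, fun i => ae_le_set.2 ?_⟩
  obtain ⟨k, hk⟩ := hinter fun n => if n = 0 then j else i
  have hki : μ (s k) ≤ μ (s j ∩ s i) :=
    measure_mono_ae <| hk.trans <| Eventually.of_forall <|
      subset_inter (iInter_subset_of_subset 0 le_rfl) (iInter_subset_of_subset 1 le_rfl)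
  refine le_antisymm (ENNReal.le_of_add_le_add_left (measure_ne_top μ (s j ∩ s i)) ?_) bot_le
  rw [measure_inter_add_sdiff _ (hs i), add_zero]
  exact (hmin k).trans hki

namespace MeasureTheory.AEEqFun

variable {μ : Measure Ω}

theorem exists_ae_eq_comp (ξ : ℕ → Ω →ₘ[μ] ℝ) {N : Ω → ℕ} (hN : Measurable N) :
    ∃ z : Ω →ₘ[μ] ℝ, ∀ᵐ ω ∂μ, z ω = ξ (N ω) ω := by
  have hξ : Measurable fun p : Ω × ℕ => ξ p.2 p.1 :=
    measurable_from_prod_countable_left fun n => (ξ n).stronglyMeasurable.measurable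
  exact ⟨mk _ (hξ.comp (measurable_id.prodMk hN)).aestronglyMeasurable, coeFn_mk _ _⟩

theorem exists_ae_eq_ite (x y : Ω →ₘ[μ] ℝ) {A : Set Ω} (hA : MeasurableSet A) :
    ∃ z : Ω →ₘ[μ] ℝ, ∀ᵐ ω ∂μ, z ω = if ω ∈ A then x ω else y ω := by
  have hN : Measurable fun ω => if ω ∈ A then 0 else 1 := .ite hA measurable_const measurable_const
  obtain ⟨z, hz⟩ := exists_ae_eq_comp (fun n => if n = 0 then x else y) hN
  refine ⟨z, hz.mono fun ω hω => ?_⟩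
  split_ifs at hω ⊢ <;> simp_all

theorem coeFn_mul_add_one_sub_mul (lam x y : Ω →ₘ[μ] ℝ) :
    ∀ᵐ ω ∂μ, (lam * x + (1 - lam) * y) ω = lam ω * x ω + (1 - lam ω) * y ω := by
  filter_upwards [coeFn_add (lam * x) ((1 - lam) * y), coeFn_mul lam x, coeFn_mul (1 - lam) y,
    coeFn_sub 1 lam, coeFn_one (β := ℝ) (μ := μ)] with ω h₁ h₂ h₃ h₄ h₅
  simp only [h₁, Pi.add_apply, h₂, h₃, Pi.mul_apply, h₄, Pi.sub_apply, h₅, Pi.one_apply]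

end MeasureTheory.AEEqFun

section Regular

variable {μ : Measure Ω} {π : (Ω →ₘ[μ] ℝ) → Ω → EReal}

theorem Reg.ae_eq_of_ae_eq_on (hreg : Reg μ π) {A : Set Ω} (hA : MeasurableSet A)
    {x z : Ω →ₘ[μ] ℝ} (h : ∀ᵐ ω ∂μ, ω ∈ A → z ω = x ω) :
    ∀ᵐ ω ∂μ, ω ∈ A → π z ω = π x ω := by
  have hz : ∀ᵐ ω ∂μ, z ω = if ω ∈ A then x ω else z ω :=
    h.mono fun ω hω => by split_ifs with hωA; exacts [hω hωA, rfl]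
  filter_upwards [hreg x z A hA z hz] with ω hω hωA
  rw [hω, if_pos hωA]

theorem Reg.ae_eq_comp (hreg : Reg μ π) {ξ : ℕ → Ω →ₘ[μ] ℝ} {N : Ω → ℕ} (hN : Measurable N)
    {z : Ω →ₘ[μ] ℝ} (hz : ∀ᵐ ω ∂μ, z ω = ξ (N ω) ω) :
    ∀ᵐ ω ∂μ, π z ω = π (ξ (N ω)) ω := by
  have h : ∀ n, ∀ᵐ ω ∂μ, N ω = n → π z ω = π (ξ n) ω := fun n =>
    hreg.ae_eq_of_ae_eq_on (hN (measurableSet_singleton n)) <|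
      hz.mono fun ω hω (hn : N ω = n) => hn ▸ hω
  filter_upwards [ae_all_iff.2 h] with ω hω using hω _ rfl

theorem Reg.exists_ae_top_iff_forall (hmeas : ∀ ξ, Measurable (π ξ)) (hreg : Reg μ π)
    (ξ : ℕ → Ω →ₘ[μ] ℝ) : ∃ z : Ω →ₘ[μ] ℝ, ∀ᵐ ω ∂μ, π z ω = ⊤ ↔ ∀ n, π (ξ n) ω = ⊤ := by
  have htop : ∀ n, MeasurableSet {ω | π (ξ n) ω = ⊤} := fun n =>
    hmeas _ (measurableSet_singleton ⊤)
  -- `N ω` is the first index with `π (ξ N) ω < ⊤`, or `0` if there is none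
  let p : Ω → ℕ → Prop := fun ω n => π (ξ n) ω ≠ ⊤ ∨ ∀ k, π (ξ k) ω = ⊤
  have hp : ∀ ω, ∃ n, p ω n := fun ω => by
    by_cases h : ∀ k, π (ξ k) ω = ⊤
    · exact ⟨0, .inr h⟩
    · obtain ⟨n, hn⟩ := not_forall.1 h
      exact ⟨n, .inl hn⟩
  have hN := measurable_find hp fun n => by
    simpa only [p, ofPred_or, ofPred_forall, compl_ofPred] using (htop n).compl.union (.iInter htop)
  obtain ⟨z, hz⟩ := AEEqFun.exists_ae_eq_comp ξ hN
  refine ⟨z, (hreg.ae_eq_comp hN hz).mono fun ω hω => ?_⟩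
  rw [hω]
  rcases Nat.find_spec (hp ω) with hne | hall
  · exact iff_of_false hne fun h => hne (h _)
  · exact iff_of_true (hall _) hall

theorem IsMaxInfty.exists_ae_ne_top [IsFiniteMeasure μ] (hmeas : ∀ ξ, Measurable (π ξ))
    (hreg : Reg μ π) {U : Set Ω} (hU : IsMaxInfty μ π U) :
    ∃ ξ₀ : Ω →ₘ[μ] ℝ, ∀ᵐ ω ∂μ, ω ∉ U → π ξ₀ ω ≠ ⊤ := by
  have htop : ∀ ξ, MeasurableSet {ω | π ξ ω = ⊤} := fun ξ => hmeas ξ (measurableSet_singleton ⊤)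
  obtain ⟨ξ₀, hmin⟩ := exists_ae_minimal_of_countable_iInter μ htop fun f => by
    obtain ⟨z, hz⟩ := hreg.exists_ae_top_iff_forall hmeas f
    exact ⟨z, hz.mono fun ω hω h => mem_iInter.2 (hω.1 h)⟩
  have hnull : μ ({ω | π ξ₀ ω = ⊤} \ U) = 0 :=
    hU.2.2 _ (htop ξ₀) fun ξ => (hmin ξ).mono fun ω hω h => hω h
  exact ⟨ξ₀, (measure_eq_zero_iff_ae_notMem.1 hnull).mono fun ω hω hωU h => hω ⟨h, hωU⟩⟩

theorem IsQuasiconvex.levelSet_l0Convex (hπ : IsQuasiconvex μ π) (T : Set Ω)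
    (Y : Ω →ₘ[μ] ℝ) : L0Convex μ (levelSet μ π T Y) := by
  intro x hx y hy lam hlam
  show ∀ᵐ ω ∂μ, _
  filter_upwards [hπ x y lam hlam, hx, hy] with ω hq hxω hyω
  by_cases hωT : ω ∈ T
  · simp only [if_pos hωT] at hxω hyω ⊢
    exact hq.trans (max_le hxω hyω)
  · simpa only [if_neg hωT] using hxω

theorem IsQuasiconvex.l0Convex_setOf_lt (hπ : IsQuasiconvex μ π) (Y : Ω → EReal) (D : Set Ω) :
    L0Convex μ {ξ : Ω →ₘ[μ] ℝ | ∀ᵐ ω ∂μ, ω ∈ D → π ξ ω < Y ω} := by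
  intro x hx y hy lam hlam
  show ∀ᵐ ω ∂μ, _
  filter_upwards [hπ x y lam hlam, hx, hy] with ω hq hxω hyω hωD
  exact hq.trans_lt (max_lt (hxω hωD) (hyω hωD))

theorem Reg.ae_le_of_levelSet_l0Convex (hmeas : ∀ ξ, Measurable (π ξ)) (hreg : Reg μ π)
    {U : Set Ω} (hU : MeasurableSet U) {ξ₀ : Ω →ₘ[μ] ℝ} (hξ₀ : ∀ᵐ ω ∂μ, ω ∉ U → π ξ₀ ω ≠ ⊤)
    (hconv : ∀ Y, L0Convex μ (levelSet μ π Uᶜ Y)) (x₁ x₂ lam : Ω →ₘ[μ] ℝ)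
    (hlam : ∀ᵐ ω ∂μ, 0 ≤ lam ω ∧ lam ω ≤ 1) (q : ℝ) :
    ∀ᵐ ω ∂μ, ω ∉ U → π x₁ ω ≤ q → π x₂ ω ≤ q → π (lam * x₁ + (1 - lam) * x₂) ω ≤ q := by
  obtain ⟨A, hA, hAdef⟩ : ∃ A, MeasurableSet A ∧ A = Uᶜ ∩ {ω | π x₁ ω ≤ q} ∩ {ω | π x₂ ω ≤ q} :=
    ⟨_, (hU.compl.inter (measurableSet_le (hmeas x₁) measurable_const)).inter
      (measurableSet_le (hmeas x₂) measurable_const), rfl⟩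
  let Yf : Ω → ℝ := fun ω => if ω ∈ A then q else max (π ξ₀ ω).toReal 0
  have hYf : Measurable Yf :=
    .ite hA measurable_const ((measurable_ereal_toReal.comp (hmeas ξ₀)).max measurable_const)
  obtain ⟨Y, hY⟩ : ∃ Y : Ω →ₘ[μ] ℝ, Y =ᵐ[μ] Yf := ⟨_, AEEqFun.coeFn_mk _ hYf.aestronglyMeasurable⟩
  have hmem : ∀ x y : Ω →ₘ[μ] ℝ, (∀ᵐ ω ∂μ, ω ∈ A → π x ω ≤ q) →
      (∀ᵐ ω ∂μ, y ω = if ω ∈ A then x ω else ξ₀ ω) → y ∈ levelSet μ π Uᶜ Y := by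
    intro x y hx hy
    filter_upwards [hreg x ξ₀ A hA y hy, hY, hξ₀, hx] with ω hπy hYω hξ₀ω hxω
    rw [hYω]
    by_cases hωA : ω ∈ A
    · simpa [hπy, hωA, Yf, (hAdef ▸ hωA).1.1] using hxω hωA
    · simp only [hπy, hωA, Yf, if_false]
      split_ifs with hωU
      · exact (EReal.le_coe_toReal (hξ₀ω hωU)).trans (EReal.coe_le_coe_iff.2 (le_max_left _ _))
      · exact EReal.coe_le_coe_iff.2 (le_max_right _ _)
  obtain ⟨y₁, hy₁⟩ := AEEqFun.exists_ae_eq_ite x₁ ξ₀ hA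
  obtain ⟨y₂, hy₂⟩ := AEEqFun.exists_ae_eq_ite x₂ ξ₀ hA
  have hy := hconv Y y₁ (hmem x₁ y₁ (ae_of_all _ fun ω h => (hAdef ▸ h).1.2) hy₁)
    y₂ (hmem x₂ y₂ (ae_of_all _ fun ω h => (hAdef ▸ h).2) hy₂) lam hlam
  have hcomb : ∀ᵐ ω ∂μ, ω ∈ A →
      (lam * y₁ + (1 - lam) * y₂) ω = (lam * x₁ + (1 - lam) * x₂) ω := by
    filter_upwards [AEEqFun.coeFn_mul_add_one_sub_mul lam y₁ y₂,
      AEEqFun.coeFn_mul_add_one_sub_mul lam x₁ x₂, hy₁, hy₂] with ω hy hx h₁ h₂ hωA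
    rw [hy, hx, h₁, h₂, if_pos hωA, if_pos hωA]
  filter_upwards [hy, hreg.ae_eq_of_ae_eq_on hA hcomb, hY] with ω hyω hπ hYω hωU h₁ h₂
  have hωA : ω ∈ A := hAdef ▸ ⟨⟨hωU, h₁⟩, h₂⟩
  simpa [← hπ hωA, hωU, hYω, Yf, hωA] using hyω

theorem Reg.isQuasiconvex_of_levelSet_l0Convex [IsFiniteMeasure μ]
    (hmeas : ∀ ξ, Measurable (π ξ)) (hreg : Reg μ π) {U : Set Ω} (hU : IsMaxInfty μ π U)
    (hconv : ∀ Y, L0Convex μ (levelSet μ π Uᶜ Y)) : IsQuasiconvex μ π := by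
  intro x₁ x₂ lam hlam
  obtain ⟨ξ₀, hξ₀⟩ := hU.exists_ae_ne_top hmeas hreg
  have hq : ∀ q : ℚ, ∀ᵐ ω ∂μ, ω ∉ U → π x₁ ω ≤ (q : ℝ) → π x₂ ω ≤ (q : ℝ) →
      π (lam * x₁ + (1 - lam) * x₂) ω ≤ (q : ℝ) := fun q =>
    hreg.ae_le_of_levelSet_l0Convex hmeas hU.1 hξ₀ hconv x₁ x₂ lam hlam q
  filter_upwards [ae_all_iff.2 hq, hU.2.1 x₁] with ω hqω hUω
  by_cases hωU : ω ∈ U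
  · simp [hUω hωU]
  by_contra hlt
  obtain ⟨q, hmax, hq⟩ := EReal.exists_rat_btwn_of_lt (not_le.1 hlt)
  exact (hqω q hωU ((le_max_left _ _).trans hmax.le) ((le_max_right _ _).trans hmax.le)).not_gt hq

end Regular

theorem stmt18_general (μ : Measure Ω) [IsProbabilityMeasure μ]
    (π : (Ω →ₘ[μ] ℝ) → Ω → EReal)
    (hmeas : ∀ ξ : Ω →ₘ[μ] ℝ, Measurable (π ξ))
    (hreg : Reg μ π)
    (U : Set Ω) (hU : IsMaxInfty μ π U) :
    ((∀ x₁ x₂ lam : Ω →ₘ[μ] ℝ, (∀ᵐ ω ∂μ, 0 ≤ lam ω ∧ lam ω ≤ 1) →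
        ∀ᵐ ω ∂μ, π (lam * x₁ + (1 - lam) * x₂) ω ≤ max (π x₁ ω) (π x₂ ω)) ↔
      (∀ Y : Ω →ₘ[μ] ℝ, L0Convex μ (levelSet μ π Uᶜ Y))) ∧
      ((∀ x₁ x₂ lam : Ω →ₘ[μ] ℝ, (∀ᵐ ω ∂μ, 0 ≤ lam ω ∧ lam ω ≤ 1) →
        ∀ᵐ ω ∂μ, π (lam * x₁ + (1 - lam) * x₂) ω ≤ max (π x₁ ω) (π x₂ ω)) →
        ∀ Y : Ω → EReal, Measurable Y → ∀ D : Set Ω, MeasurableSet D →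
          L0Convex μ {ξ : Ω →ₘ[μ] ℝ | ∀ᵐ ω ∂μ, ω ∈ D → π ξ ω < Y ω}) :=
  ⟨⟨fun hπ => IsQuasiconvex.levelSet_l0Convex hπ Uᶜ,
      Reg.isQuasiconvex_of_levelSet_l0Convex hmeas hreg hU⟩,
    fun hπ Y _ D _ => IsQuasiconvex.l0Convex_setOf_lt hπ Y D⟩

/-- **Quasiconvexity via level sets (Remark on (QCO)).**  Let `π : L⁰ → L̄⁰` be
regular (REG) and let `U = Υ_π` (so `Uᶜ = T_π`).  Then (a) the quasiconvexity
inequality `π(Λx₁ + (1−Λ)x₂) ≤ π(x₁) ∨ π(x₂)` a.s. holds for all `x₁, x₂, Λ`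
with `0 ≤ Λ ≤ 1` a.s. iff all lower level sets `U_Y`, `Y ∈ L⁰`, are `L⁰`-convex;
(b) if the inequality holds then `{ξ ∣ π ξ < Y a.e. on D}` is `L⁰`-convex for
every `Y ∈ L̄⁰` and `D ∈ 𝒢`. -/
theorem stmt18 (μ : Measure Ω) [IsProbabilityMeasure μ]
    (π : (Ω →ₘ[μ] ℝ) → Ω → EReal)
    (hmeas : ∀ ξ : Ω →ₘ[μ] ℝ, Measurable (π ξ))
    (hnbot : ∀ ξ : Ω →ₘ[μ] ℝ, ∀ᵐ ω ∂μ, π ξ ω ≠ ⊥)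
    (hreg : Reg μ π)
    (U : Set Ω) (hU : IsMaxInfty μ π U) :
    ((∀ x₁ x₂ lam : Ω →ₘ[μ] ℝ, (∀ᵐ ω ∂μ, 0 ≤ lam ω ∧ lam ω ≤ 1) →
        ∀ᵐ ω ∂μ, π (lam * x₁ + (1 - lam) * x₂) ω ≤ max (π x₁ ω) (π x₂ ω)) ↔
      (∀ Y : Ω →ₘ[μ] ℝ, L0Convex μ (levelSet μ π Uᶜ Y))) ∧
      ((∀ x₁ x₂ lam : Ω →ₘ[μ] ℝ, (∀ᵐ ω ∂μ, 0 ≤ lam ω ∧ lam ω ≤ 1) →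
        ∀ᵐ ω ∂μ, π (lam * x₁ + (1 - lam) * x₂) ω ≤ max (π x₁ ω) (π x₂ ω)) →
        ∀ Y : Ω → EReal, Measurable Y → ∀ D : Set Ω, MeasurableSet D →
          L0Convex μ {ξ : Ω →ₘ[μ] ℝ | ∀ᵐ ω ∂μ, ω ∈ D → π ξ ω < Y ω}) :=
  stmt18_general μ π hmeas hreg U hU
end
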